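/- arXiv:math/0407322 — 4 statements merged into one kernel-verified Lean document; each statement's English description precedes it below -/
import Mathlib

section
/- The generating function of the numbers c_n of multisets is of Euler type: in the ring of formal power series over ℚ, Σ_{n≥0} c_n x^n = Π_{j≥1} (1 − x^j)^{−a_j}. -/
open Finset Filter

/-- The number of multisets of total size `n` determined by the parameters `a j`
(the number of one-component multisets of size `j`), i.e.
`c_n = Σ_{η ∈ Ω_n} Π_{j=1}^n C(a_j + η_j - 1, η_j)` where
`Ω_n = {η : Σ_{j=1}^n j·η_j = n}` (indices shifted: `j ∈ Fin n` stands for `j+1`). -/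
def multisetCount (a : ℕ → ℕ) (n : ℕ) : ℕ :=
  ∑ η : Fin n → Fin (n + 1),
    if ∑ j : Fin n, (j.1 + 1) * (η j).1 = n then
      ∏ j : Fin n, Nat.choose (a (j.1 + 1) + (η j).1 - 1) (η j).1
    else 0

/-- The Euler factor `(1 - x^j)^{-a_j} = Σ_{l≥0} C(a_j + l - 1, l) x^{jl}`
as a formal power series over `ℚ`. -/
noncomputable def eulerFactor (a : ℕ → ℕ) (j : ℕ) : PowerSeries ℚ :=
  PowerSeries.mk fun m => if j ∣ m then (Nat.choose (a j + m / j - 1) (m / j) : ℚ) else 0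

@[to_additive sum_Icc_one_eq_sum_fin]
lemma prod_Icc_one_eq_prod_fin {M : Type*} [CommMonoid M] (n : ℕ) (f : ℕ → M) :
    ∏ i ∈ Finset.Icc 1 n, f i = ∏ j : Fin n, f (j.1 + 1) := by
  rw [← Finset.Ico_add_one_right_eq_Icc, Finset.prod_Ico_eq_prod_range,
    ← Fin.prod_univ_eq_prod_range (fun k => f (1 + k)) _]
  simp [add_comm]

/-- in `ℚ[[x]]`, `Σ_{n≥0} c_n x^n = Π_{j≥1} (1 - x^j)^{-a_j}`.
Since equality of formal power series is coefficientwise and the `n`-th coefficient of the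
infinite product equals that of any partial product `Π_{j=1}^N` with `N ≥ n` (the omitted
factors have constant term `1` and no other terms of degree `≤ n`), this is expressed as:
for every `n` and every `N ≥ n`, the `n`-th coefficient of `Π_{j=1}^N (1 - x^j)^{-a_j}`
equals `c_n`. -/
theorem multiset_generating_function (a : ℕ → ℕ) (n N : ℕ) (hnN : n ≤ N) :
    PowerSeries.coeff n (∏ j ∈ Finset.Icc 1 N, eulerFactor a j) = (multisetCount a n : ℚ) := by
  classical
  rw [PowerSeries.coeff_prod]
  simp only [eulerFactor, PowerSeries.coeff_mk, Finset.prod_ite_zero]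
  rw [← Finset.sum_filter, multisetCount]
  push_cast
  rw [← Finset.sum_filter]
  have key : ∀ l : ℕ →₀ ℕ, l ∈ Finset.finsuppAntidiag (Finset.Icc 1 N) n →
      (∀ i ∈ Finset.Icc 1 N, i ∣ l i) →
      (∀ i, l i ≤ n) ∧ (∀ i, n < i → l i = 0) := by
    intro l hl hdvd
    rw [Finset.mem_finsuppAntidiag] at hl
    obtain ⟨hsum, hsupp⟩ := hl
    have hle : ∀ i, l i ≤ n := by
      intro i
      by_cases hi : i ∈ Finset.Icc 1 N
      · exact hsum ▸ Finset.single_le_sum (fun _ _ => Nat.zero_le _) hi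
      · have : l i = 0 := Finsupp.notMem_support_iff.1 fun h => hi (hsupp h)
        omega
    refine ⟨hle, fun i hi => ?_⟩
    by_cases hiN : i ∈ Finset.Icc 1 N
    · exact Nat.eq_zero_of_dvd_of_lt (hdvd i hiN) (lt_of_le_of_lt (hle i) hi)
    · exact Finsupp.notMem_support_iff.1 fun h => hiN (hsupp h)
  refine Finset.sum_nbij'
    (fun l (j : Fin n) => (⟨min (l (j.1 + 1) / (j.1 + 1)) n,
      Nat.lt_succ_of_le (min_le_right _ _)⟩ : Fin (n + 1)))
    (fun η => Finsupp.onFinset (Finset.Icc 1 n)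
      (fun i => if h : 1 ≤ i ∧ i ≤ n then i * (η ⟨i - 1, by omega⟩).1 else 0)
      (fun i h => by
        rw [Finset.mem_Icc]
        by_contra hc
        exact h (dif_neg (by omega))))
    ?_ ?_ ?_ ?_ ?_
  · -- forward map lands in the target
    intro l hl
    rw [Finset.mem_filter] at hl
    obtain ⟨hmem, hdvd⟩ := hl
    obtain ⟨hle, hzero⟩ := key l hmem hdvd
    have hsum : ∑ i ∈ Finset.Icc 1 N, l i = n :=
      ((Finset.mem_finsuppAntidiag).1 hmem).1
    rw [Finset.mem_filter]
    refine ⟨Finset.mem_univ _, ?_⟩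
    have hterm : ∀ j : Fin n, (j.1 + 1) * min (l (j.1 + 1) / (j.1 + 1)) n = l (j.1 + 1) := by
      intro j
      have hjN : j.1 + 1 ∈ Finset.Icc 1 N := Finset.mem_Icc.2 ⟨by omega, by have := j.2; omega⟩
      have hdj : (j.1 + 1) ∣ l (j.1 + 1) := hdvd _ hjN
      have h1 : l (j.1 + 1) / (j.1 + 1) ≤ n := le_trans (Nat.div_le_self _ _) (hle _)
      rw [min_eq_left h1, Nat.mul_div_cancel' hdj]
    calc ∑ j : Fin n, (j.1 + 1) * min (l (j.1 + 1) / (j.1 + 1)) n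
        = ∑ j : Fin n, l (j.1 + 1) := Finset.sum_congr rfl fun j _ => hterm j
      _ = ∑ i ∈ Finset.Icc 1 n, l i := (sum_Icc_one_eq_sum_fin n _).symm
      _ = ∑ i ∈ Finset.Icc 1 N, l i := by
            refine Finset.sum_subset (Finset.Icc_subset_Icc_right hnN) fun i hi hni => ?_
            rw [Finset.mem_Icc] at hi hni
            exact hzero i (by omega)
      _ = n := hsum
  · -- backward map lands in the source
    intro η hη
    rw [Finset.mem_filter] at hη
    obtain ⟨-, hQ⟩ := hη
    rw [Finset.mem_filter, Finset.mem_finsuppAntidiag]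
    refine ⟨⟨?_, ?_⟩, ?_⟩
    · calc ∑ i ∈ Finset.Icc 1 N,
            (if h : 1 ≤ i ∧ i ≤ n then i * (η ⟨i - 1, by omega⟩).1 else 0)
          = ∑ i ∈ Finset.Icc 1 n,
            (if h : 1 ≤ i ∧ i ≤ n then i * (η ⟨i - 1, by omega⟩).1 else 0) := by
            refine (Finset.sum_subset (Finset.Icc_subset_Icc_right hnN) fun i hi hni => ?_).symm
            rw [Finset.mem_Icc] at hi hni
            exact dif_neg (by omega)
        _ = ∑ j : Fin n,
            (if h : 1 ≤ j.1 + 1 ∧ j.1 + 1 ≤ n then (j.1 + 1) * (η ⟨j.1 + 1 - 1, by omega⟩).1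
              else 0) := sum_Icc_one_eq_sum_fin n _
        _ = ∑ j : Fin n, (j.1 + 1) * (η j).1 := by
            refine Finset.sum_congr rfl fun j _ => ?_
            rw [dif_pos ⟨by omega, j.2⟩]
            congr 1
        _ = n := hQ
    · exact (Finsupp.support_onFinset_subset).trans (Finset.Icc_subset_Icc_right hnN)
    · intro i hi
      simp only [Finsupp.onFinset_apply]
      split
      · exact Dvd.intro _ rfl
      · exact dvd_zero i
  · -- left inverse
    intro l hl
    rw [Finset.mem_filter] at hl
    obtain ⟨hmem, hdvd⟩ := hl
    obtain ⟨hle, hzero⟩ := key l hmem hdvd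
    have hsupp := ((Finset.mem_finsuppAntidiag).1 hmem).2
    ext i
    simp only [Finsupp.onFinset_apply]
    by_cases h : 1 ≤ i ∧ i ≤ n
    · rw [dif_pos h]
      have hi1 : i - 1 + 1 = i := by omega
      have hiN : i ∈ Finset.Icc 1 N := Finset.mem_Icc.2 ⟨h.1, le_trans h.2 hnN⟩
      have hdi : i ∣ l i := hdvd i hiN
      have h1 : l i / i ≤ n := le_trans (Nat.div_le_self _ _) (hle _)
      simp only [hi1]
      rw [min_eq_left h1, Nat.mul_div_cancel' hdi]
    · rw [dif_neg h]
      by_cases hi0 : i = 0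
      · subst hi0
        by_contra h0
        have := hsupp (Finsupp.mem_support_iff.2 fun hc => h0 hc.symm)
        rw [Finset.mem_Icc] at this; omega
      · exact (hzero i (by omega)).symm
  · -- right inverse
    intro η hη
    funext j
    apply Fin.ext
    simp only [Finsupp.onFinset_apply]
    have hcond : 1 ≤ j.1 + 1 ∧ j.1 + 1 ≤ n := ⟨by omega, j.2⟩
    rw [dif_pos hcond]
    have hidx : (⟨j.1 + 1 - 1, by omega⟩ : Fin n) = j := Fin.ext (by simp)
    rw [hidx, Nat.mul_div_cancel_left _ (Nat.succ_pos j.1)]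
    exact min_eq_left (Nat.lt_succ_iff.1 (η j).2)
  · -- values agree
    intro l hl
    rw [Finset.mem_filter] at hl
    obtain ⟨hmem, hdvd⟩ := hl
    obtain ⟨hle, hzero⟩ := key l hmem hdvd
    calc ∏ i ∈ Finset.Icc 1 N,
          ((Nat.choose (a i + l i / i - 1) (l i / i) : ℚ))
        = ∏ i ∈ Finset.Icc 1 n, ((Nat.choose (a i + l i / i - 1) (l i / i) : ℚ)) := by
          refine (Finset.prod_subset (Finset.Icc_subset_Icc_right hnN) fun i hi hni => ?_).symm
          rw [Finset.mem_Icc] at hi hni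
          rw [hzero i (by omega)]
          simp
      _ = ∏ j : Fin n,
            ((Nat.choose (a (j.1 + 1) + l (j.1 + 1) / (j.1 + 1) - 1)
              (l (j.1 + 1) / (j.1 + 1)) : ℚ)) := prod_Icc_one_eq_prod_fin n _
      _ = _ := by
          refine Finset.prod_congr rfl fun j _ => ?_
          have h1 : l (j.1 + 1) / (j.1 + 1) ≤ n := le_trans (Nat.div_le_self _ _) (hle _)
          simp only [Fin.val_mk, min_eq_left h1]
end

section
/- Fix n ≥ 1, σ > 0 and an integer s ≥ 3. Then for every α ∈ ℝ, φ(α) = exp( 2πi M_n α − 2π² B_n² α² + Σ_{l=3}^{s−1} ((2πi)^l ρ_l / l!) α^l + R(α) ), where the remainder satisfies |R(α)| ≤ (2π)^s ρ_s |α|^s / s!. -/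
open Finset Filter

/-- `M_n(σ) = Σ_{j=1}^n j a_j e^{-jσ}/(1-e^{-jσ})`. -/
noncomputable def Mfun (a : ℕ → ℕ) (n : ℕ) (σ : ℝ) : ℝ :=
  ∑ j ∈ Finset.Icc 1 n, (j : ℝ) * (a j) * Real.exp (-(j * σ)) / (1 - Real.exp (-(j * σ)))

/-- `B_n²(σ) = Σ_{j=1}^n j² a_j e^{-jσ}/(1-e^{-jσ})²`. -/
noncomputable def B2 (a : ℕ → ℕ) (n : ℕ) (σ : ℝ) : ℝ :=
  ∑ j ∈ Finset.Icc 1 n, (j : ℝ) ^ 2 * (a j) * Real.exp (-(j * σ)) / (1 - Real.exp (-(j * σ))) ^ 2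

/-- `ρ_l(n, σ) = Σ_{j=1}^n j^l a_j Σ_{k≥1} k^{l-1} e^{-jkσ}`. -/
noncomputable def rho (a : ℕ → ℕ) (l n : ℕ) (σ : ℝ) : ℝ :=
  ∑ j ∈ Finset.Icc 1 n, (j : ℝ) ^ l * (a j) *
    ∑' k : ℕ, ((k : ℝ) + 1) ^ (l - 1) * Real.exp (-((j : ℝ) * ((k : ℝ) + 1) * σ))

/-- The characteristic function `φ(α) = Π_{j=1}^n ((1-e^{-jσ})/(1-e^{-jσ}e^{2πiαj}))^{a_j}`. -/
noncomputable def phi (a : ℕ → ℕ) (n : ℕ) (σ : ℝ) (α : ℝ) : ℂ :=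
  ∏ j ∈ Finset.Icc 1 n,
    (((1 - Real.exp (-(j * σ)) : ℝ) : ℂ) /
      (1 - ((Real.exp (-(j * σ)) : ℝ) : ℂ) *
        Complex.exp (2 * Real.pi * Complex.I * α * j))) ^ (a j)

/-! Each factor of `φ` is `(1 - q) / (1 - q e^{iy})` with `q = e^{-jσ} ∈ (0, 1)` and
`y = 2παj`, whose logarithm is `∑_{k ≥ 1} q^k (e^{iky} - 1) / k`. Expanding `e^{iky} - 1` to
order `s - 1` with the sharp remainder bound `|e^{ix} - ∑_{l < s} (ix)^l / l!| ≤ |x|^s / s!`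
and summing over `k` turns the `l`-th Taylor term into `(iy)^l / l! · ∑_{k ≥ 1} k^{l-1} q^k`;
weighting by `a_j` and summing over `j` gives `(2πiα)^l ρ_l / l!`. Finally `ρ_1 = M_n` and
`ρ_2 = B_n²`, because `∑ q^k = q / (1 - q)` and `∑ k q^k = q / (1 - q)^2`. -/

open Complex
open scoped Nat ComplexConjugate

noncomputable def cexpTaylorRem (m : ℕ) (x : ℝ) : ℂ :=
  cexp (x * I) - ∑ l ∈ range m, (x * I) ^ l / l !

lemma cexpTaylorRem_succ_zero (m : ℕ) : cexpTaylorRem (m + 1) 0 = 0 := by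
  simp [cexpTaylorRem, sum_range_succ']

lemma cexpTaylorRem_neg (m : ℕ) (x : ℝ) : cexpTaylorRem m (-x) = conj (cexpTaylorRem m x) := by
  simp [cexpTaylorRem, map_sum, ← exp_conj]

lemma hasDerivAt_cexpTaylorRem_succ (m : ℕ) (t : ℝ) :
    HasDerivAt (cexpTaylorRem (m + 1)) (I * cexpTaylorRem m t) t := by
  have hterm (l : ℕ) : HasDerivAt (fun z : ℂ => (z * I) ^ (l + 1) / (l + 1)!)
      (I * ((t * I) ^ l / l !)) t := by
    refine (((hasDerivAt_pow (l + 1) ((t : ℂ) * I)).comp (t : ℂ)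
      ((hasDerivAt_id (t : ℂ)).mul_const I)).div_const ((l + 1)! : ℂ)).congr_deriv ?_
    simp only [Nat.add_sub_cancel, Nat.factorial_succ, Nat.cast_mul, one_mul]
    field_simp
  have hF : HasDerivAt
      (fun z : ℂ => cexp (z * I) - 1 - ∑ l ∈ range m, (z * I) ^ (l + 1) / (l + 1)!)
      (cexp (t * I) * I - ∑ l ∈ range m, I * ((t * I) ^ l / l !)) t :=
    ((((hasDerivAt_id (t : ℂ)).mul_const I).cexp).sub_const 1).sub
      (HasDerivAt.fun_sum fun l _ => hterm l) |>.congr_deriv (by simp)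
  convert hF.comp_ofReal using 1
  · ext x
    simp [cexpTaylorRem, sum_range_succ', sub_sub, add_comm]
  · simp [cexpTaylorRem, mul_sub, mul_sum, mul_comm]

lemma norm_cexpTaylorRem_le (m : ℕ) (x : ℝ) : ‖cexpTaylorRem m x‖ ≤ |x| ^ m / m ! := by
  induction m generalizing x with
  | zero => simp [cexpTaylorRem, norm_exp_ofReal_mul_I]
  | succ m ih =>
    wlog hx : 0 ≤ x generalizing x
    · simpa [cexpTaylorRem_neg] using this (-x) (by linarith)
    have hcont : Continuous (cexpTaylorRem m) := by unfold cexpTaylorRem; fun_prop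
    have hFTC : ∫ t in (0 : ℝ)..x, I * cexpTaylorRem m t = cexpTaylorRem (m + 1) x := by
      rw [intervalIntegral.integral_eq_sub_of_hasDerivAt
        (fun t _ => hasDerivAt_cexpTaylorRem_succ m t)
        ((continuous_const.mul hcont).intervalIntegrable 0 x), cexpTaylorRem_succ_zero, sub_zero]
    have hbound : ∀ᵐ t ∂MeasureTheory.volume.restrict (Set.uIoc 0 x),
        ‖I * cexpTaylorRem m t‖ ≤ t ^ m / m ! := by
      filter_upwards [MeasureTheory.ae_restrict_mem measurableSet_uIoc] with t ht
      rw [Set.uIoc_of_le hx] at ht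
      simpa [abs_of_pos ht.1] using ih t
    rw [← hFTC]
    refine (intervalIntegral.norm_integral_le_abs_of_norm_le hbound
      ((by fun_prop : Continuous fun t : ℝ => t ^ m / m !).intervalIntegrable 0 x)).trans_eq ?_
    rw [intervalIntegral.integral_div, integral_pow, abs_of_nonneg hx, Nat.factorial_succ,
      zero_pow m.succ_ne_zero, sub_zero, div_div, abs_of_nonneg (by positivity)]
    push_cast
    ring

noncomputable def powGeomSum (m : ℕ) (q : ℝ) : ℝ :=
  ∑' k : ℕ, ((k : ℝ) + 1) ^ m * q ^ (k + 1)

section powGeomSum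

variable {q : ℝ}

lemma summable_pow_mul_geometric_succ (m : ℕ) (h0 : 0 ≤ q) (h1 : q < 1) :
    Summable fun k : ℕ => ((k : ℝ) + 1) ^ m * q ^ (k + 1) := by
  have hq : ‖q‖ < 1 := by rwa [Real.norm_eq_abs, abs_of_nonneg h0]
  refine ((summable_nat_add_iff (f := fun k : ℕ => (k : ℝ) ^ m * q ^ k) 1).2
    (summable_pow_mul_geometric_of_norm_lt_one m hq)).congr fun k => ?_
  push_cast
  ring

lemma powGeomSum_zero (h0 : 0 ≤ q) (h1 : q < 1) : powGeomSum 0 q = q / (1 - q) := by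
  simp_rw [powGeomSum, pow_zero, one_mul, pow_succ', tsum_mul_left,
    tsum_geometric_of_lt_one h0 h1, div_eq_mul_inv]

lemma powGeomSum_one (h0 : 0 ≤ q) (h1 : q < 1) : powGeomSum 1 q = q / (1 - q) ^ 2 := by
  have hq : ‖q‖ < 1 := by rwa [Real.norm_eq_abs, abs_of_nonneg h0]
  have hs : Summable fun k : ℕ => (k : ℝ) * q ^ k := by
    simpa using summable_pow_mul_geometric_of_norm_lt_one 1 hq
  rw [← tsum_coe_mul_geometric_of_norm_lt_one hq, hs.tsum_eq_zero_add, powGeomSum]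
  simp

end powGeomSum

lemma hasSum_log_one_sub_sub_log_one_sub {u v : ℂ} (hu : ‖u‖ < 1) (hv : ‖v‖ < 1) :
    HasSum (fun k : ℕ => (v ^ (k + 1) - u ^ (k + 1)) / (k + 1)) (log (1 - u) - log (1 - v)) := by
  simpa only [sub_div, neg_sub_neg] using
    (hasSum_taylorSeries_neg_log' hv).sub (hasSum_taylorSeries_neg_log' hu)

lemma cexp_mul_I_sub_one_eq (m : ℕ) (x : ℝ) :
    cexp (x * I) - 1 = ∑ l ∈ Icc 1 m, (x * I) ^ l / l ! + cexpTaylorRem (m + 1) x := by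
  have hrange : range (m + 1) = insert 0 (Icc 1 m) := by
    ext l
    simp only [mem_range, mem_insert, mem_Icc]
    omega
  rw [cexpTaylorRem, hrange, sum_insert (by simp)]
  simp only [pow_zero, Nat.factorial_zero, Nat.cast_one, div_one]
  ring

noncomputable def logTaylorRem (m : ℕ) (q y : ℝ) : ℂ :=
  ∑' k : ℕ, (q : ℂ) ^ (k + 1) / (k + 1) * cexpTaylorRem (m + 1) (y * (k + 1))

section logTaylorRem

variable {q : ℝ} (m : ℕ) (y : ℝ)

lemma norm_logTaylorRem_term_le (h0 : 0 ≤ q) (k : ℕ) :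
    ‖(q : ℂ) ^ (k + 1) / (k + 1) * cexpTaylorRem (m + 1) (y * (k + 1))‖
      ≤ |y| ^ (m + 1) / (m + 1)! * (((k : ℝ) + 1) ^ m * q ^ (k + 1)) := by
  have hk : ‖(k : ℂ) + 1‖ = (k : ℝ) + 1 := by exact_mod_cast Complex.norm_natCast (k + 1)
  rw [norm_mul, norm_div, hk, norm_pow, Complex.norm_real, Real.norm_of_nonneg h0]
  calc q ^ (k + 1) / ((k : ℝ) + 1) * ‖cexpTaylorRem (m + 1) (y * (k + 1))‖
      ≤ q ^ (k + 1) / ((k : ℝ) + 1) * (|y * (k + 1)| ^ (m + 1) / (m + 1)!) := by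
        gcongr
        exact norm_cexpTaylorRem_le _ _
    _ = |y| ^ (m + 1) / (m + 1)! * (((k : ℝ) + 1) ^ m * q ^ (k + 1)) := by
        rw [abs_mul, abs_of_pos (by positivity : (0 : ℝ) < k + 1), mul_pow]
        field_simp
        ring

lemma norm_logTaylorRem_le (h0 : 0 ≤ q) (h1 : q < 1) :
    ‖logTaylorRem m q y‖ ≤ |y| ^ (m + 1) / (m + 1)! * powGeomSum m q :=
  tsum_of_norm_bounded ((summable_pow_mul_geometric_succ m h0 h1).hasSum.mul_left _)
    (norm_logTaylorRem_term_le m y h0)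

lemma log_one_sub_sub_log_one_sub_mul_cexp (h0 : 0 ≤ q) (h1 : q < 1) :
    log (1 - q) - log (1 - q * cexp (y * I))
      = ∑ l ∈ Icc 1 m, (y * I) ^ l / l ! * powGeomSum (l - 1) q + logTaylorRem m q y := by
  have hq : ‖(q : ℂ)‖ < 1 := by rwa [Complex.norm_real, Real.norm_of_nonneg h0]
  have hqe : ‖(q : ℂ) * cexp (y * I)‖ < 1 := by
    rwa [norm_mul, Complex.norm_exp_ofReal_mul_I, mul_one]
  have hpoly : HasSum (fun k : ℕ => ∑ l ∈ Icc 1 m,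
      (y * I) ^ l / l ! * ((((k : ℝ) + 1) ^ (l - 1) * q ^ (k + 1) : ℝ) : ℂ))
      (∑ l ∈ Icc 1 m, (y * I) ^ l / l ! * powGeomSum (l - 1) q) :=
    hasSum_sum fun l _ => (Complex.hasSum_ofReal.2
      (summable_pow_mul_geometric_succ (l - 1) h0 h1).hasSum).mul_left _
  have hrem : Summable fun k : ℕ =>
      (q : ℂ) ^ (k + 1) / (k + 1) * cexpTaylorRem (m + 1) (y * (k + 1)) :=
    ((summable_pow_mul_geometric_succ m h0 h1).mul_left _).of_norm_bounded
      (norm_logTaylorRem_term_le m y h0)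
  rw [logTaylorRem]
  refine (hasSum_log_one_sub_sub_log_one_sub hq hqe).unique ?_
  convert hpoly.add hrem.hasSum using 2 with k
  have hpow : cexp (y * I) ^ (k + 1) = cexp (((y * (k + 1) : ℝ) : ℂ) * I) := by
    rw [← exp_nat_mul]
    push_cast
    ring_nf
  rw [mul_pow, hpow, ← mul_sub_one, mul_div_right_comm, cexp_mul_I_sub_one_eq m, mul_add,
    mul_sum]
  congr 1
  refine sum_congr rfl fun l hl => ?_
  obtain ⟨j, rfl⟩ : ∃ j, l = j + 1 := ⟨l - 1, by grind⟩
  push_cast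
  rw [show (y : ℂ) * (k + 1) * I = y * I * (k + 1) by ring, mul_pow]
  field_simp
  ring

lemma one_sub_div_one_sub_mul_cexp_eq (h0 : 0 ≤ q) (h1 : q < 1) :
    ((1 - q : ℝ) : ℂ) / (1 - q * cexp (y * I))
      = cexp (∑ l ∈ Icc 1 m, (y * I) ^ l / l ! * powGeomSum (l - 1) q
          + logTaylorRem m q y) := by
  have hq : (1 : ℂ) - q ≠ 0 := by exact_mod_cast (sub_pos.2 h1).ne'
  have hqe : 1 - (q : ℂ) * cexp (y * I) ≠ 0 := by
    refine sub_ne_zero.2 fun h => ?_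
    have := congrArg norm h
    rw [norm_one, norm_mul, Complex.norm_exp_ofReal_mul_I, mul_one, Complex.norm_real,
      Real.norm_of_nonneg h0] at this
    linarith
  rw [← log_one_sub_sub_log_one_sub_mul_cexp m y h0 h1, exp_sub, exp_log hq, exp_log hqe]
  push_cast
  rfl

end logTaylorRem

open scoped Real

lemma sum_Icc_one_eq_add_add_sum_Icc_three {M : Type*} [AddCommMonoid M] (f : ℕ → M) {m : ℕ}
    (hm : 2 ≤ m) : ∑ l ∈ Icc 1 m, f l = f 1 + f 2 + ∑ l ∈ Icc 3 m, f l := by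
  rw [← insert_Icc_add_one_left_eq_Icc (by omega : 1 ≤ m),
    ← insert_Icc_add_one_left_eq_Icc (by omega : 1 + 1 ≤ m), sum_insert (by simp),
    sum_insert (by simp)]
  exact (add_assoc _ _ _).symm

lemma exp_neg_nat_mul_lt_one {σ : ℝ} (hσ : 0 < σ) {j : ℕ} (hj : 0 < j) :
    Real.exp (-(j * σ)) < 1 :=
  Real.exp_lt_one_iff.2 (neg_neg_of_pos (mul_pos (Nat.cast_pos.2 hj) hσ))

section rho

variable (a : ℕ → ℕ) (n : ℕ) {σ : ℝ}

lemma rho_eq_sum_powGeomSum (l : ℕ) :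
    rho a l n σ =
      ∑ j ∈ Icc 1 n, (j : ℝ) ^ l * a j * powGeomSum (l - 1) (Real.exp (-(j * σ))) := by
  refine sum_congr rfl fun j _ => congrArg _ (tsum_congr fun k => congrArg _ ?_)
  rw [← Real.exp_nat_mul]
  push_cast
  ring_nf

lemma rho_one (hσ : 0 < σ) : rho a 1 n σ = Mfun a n σ := by
  rw [rho_eq_sum_powGeomSum, Mfun]
  refine sum_congr rfl fun j hj => ?_
  rw [Nat.sub_self,
    powGeomSum_zero (Real.exp_pos _).le (exp_neg_nat_mul_lt_one hσ (mem_Icc.1 hj).1)]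
  ring

lemma rho_two (hσ : 0 < σ) : rho a 2 n σ = B2 a n σ := by
  rw [rho_eq_sum_powGeomSum, B2]
  refine sum_congr rfl fun j hj => ?_
  rw [powGeomSum_one (Real.exp_pos _).le (exp_neg_nat_mul_lt_one hσ (mem_Icc.1 hj).1)]
  ring

lemma phi_eq_cexp (hσ : 0 < σ) (m : ℕ) (α : ℝ) :
    phi a n σ α = cexp (∑ l ∈ Icc 1 m, (2 * π * I) ^ l * (rho a l n σ : ℂ) / l ! * α ^ l
      + ∑ j ∈ Icc 1 n, a j * logTaylorRem m (Real.exp (-(j * σ))) (2 * π * α * j)) := by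
  have hfactor : ∀ j ∈ Icc 1 n,
      (((1 - Real.exp (-(j * σ)) : ℝ) : ℂ) /
        (1 - ((Real.exp (-(j * σ)) : ℝ) : ℂ) * cexp (2 * π * I * α * j))) ^ a j
      = cexp (a j * (∑ l ∈ Icc 1 m, ((2 * π * α * j : ℝ) * I) ^ l / l ! *
          powGeomSum (l - 1) (Real.exp (-(j * σ)))
        + logTaylorRem m (Real.exp (-(j * σ))) (2 * π * α * j))) := by
    intro j hj
    rw [exp_nat_mul, ← one_sub_div_one_sub_mul_cexp_eq m _ (Real.exp_pos _).le
      (exp_neg_nat_mul_lt_one hσ (mem_Icc.1 hj).1)]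
    push_cast
    ring_nf
  rw [phi, prod_congr rfl hfactor, ← exp_sum]
  congr 1
  simp_rw [mul_add, sum_add_distrib, mul_sum]
  rw [sum_comm]
  congr 1
  refine sum_congr rfl fun l _ => ?_
  rw [rho_eq_sum_powGeomSum]
  push_cast
  rw [mul_sum, sum_div, sum_mul]
  refine sum_congr rfl fun j _ => ?_
  ring

lemma norm_sum_logTaylorRem_le (hσ : 0 < σ) (m : ℕ) (α : ℝ) :
    ‖∑ j ∈ Icc 1 n, a j * logTaylorRem m (Real.exp (-(j * σ))) (2 * π * α * j)‖
      ≤ (2 * π) ^ (m + 1) * rho a (m + 1) n σ * |α| ^ (m + 1) / (m + 1)! := by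
  calc _ ≤ ∑ j ∈ Icc 1 n,
          ‖(a j : ℂ) * logTaylorRem m (Real.exp (-(j * σ))) (2 * π * α * j)‖ :=
        norm_sum_le _ _
    _ ≤ ∑ j ∈ Icc 1 n, a j * (|2 * π * α * j| ^ (m + 1) / (m + 1)! *
          powGeomSum m (Real.exp (-(j * σ)))) := by
        refine sum_le_sum fun j hj => ?_
        rw [norm_mul, Complex.norm_natCast]
        gcongr
        exact norm_logTaylorRem_le m _ (Real.exp_pos _).le
          (exp_neg_nat_mul_lt_one hσ (mem_Icc.1 hj).1)
    _ = _ := by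
        rw [rho_eq_sum_powGeomSum, Nat.add_sub_cancel, mul_sum, sum_mul, sum_div]
        refine sum_congr rfl fun j _ => ?_
        rw [abs_mul, abs_mul, abs_of_pos Real.two_pi_pos, Nat.abs_cast]
        ring

end rho

theorem phi_expansion_general (a : ℕ → ℕ) (n : ℕ) (σ : ℝ) (hσ : 0 < σ)
    (s : ℕ) (hs : 3 ≤ s) :
    ∃ R : ℝ → ℂ,
      (∀ α : ℝ, phi a n σ α =
        Complex.exp (2 * (Real.pi : ℂ) * Complex.I * (Mfun a n σ : ℝ) * (α : ℝ)
          - 2 * (Real.pi : ℂ) ^ 2 * (B2 a n σ : ℝ) * (α : ℝ) ^ 2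
          + (∑ l ∈ Finset.Icc 3 (s - 1),
              (2 * (Real.pi : ℂ) * Complex.I) ^ l * (rho a l n σ : ℝ) / (Nat.factorial l)
                * (α : ℝ) ^ l)
          + R α)) ∧
      ∀ α : ℝ, ‖R α‖ ≤ (2 * Real.pi) ^ s * rho a s n σ * |α| ^ s / (Nat.factorial s) := by
  obtain ⟨m, rfl⟩ : ∃ m, s = m + 1 := ⟨s - 1, by omega⟩
  refine ⟨fun α => ∑ j ∈ Icc 1 n, a j * logTaylorRem m (Real.exp (-(j * σ))) (2 * π * α * j),
    fun α => ?_, norm_sum_logTaylorRem_le a n hσ m⟩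
  rw [phi_eq_cexp a n hσ m, sum_Icc_one_eq_add_add_sum_Icc_three _ (by omega), rho_one a n hσ,
    rho_two a n hσ, Nat.add_sub_cancel]
  congr 1
  push_cast
  linear_combination (2 * π ^ 2 * (B2 a n σ : ℂ) * α ^ 2) * I_sq

/-- for fixed `n ≥ 1`, `σ > 0` and an integer `s ≥ 3`, for every `α ∈ ℝ`,
`φ(α) = exp(2πi M_n α - 2π² B_n² α² + Σ_{l=3}^{s-1} ((2πi)^l ρ_l / l!) α^l + R(α))`
with `|R(α)| ≤ (2π)^s ρ_s |α|^s / s!`. -/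
theorem phi_expansion (a : ℕ → ℕ) (n : ℕ) (hn : 1 ≤ n) (σ : ℝ) (hσ : 0 < σ)
    (s : ℕ) (hs : 3 ≤ s) :
    ∃ R : ℝ → ℂ,
      (∀ α : ℝ, phi a n σ α =
        Complex.exp (2 * (Real.pi : ℂ) * Complex.I * (Mfun a n σ : ℝ) * (α : ℝ)
          - 2 * (Real.pi : ℂ) ^ 2 * (B2 a n σ : ℝ) * (α : ℝ) ^ 2
          + (∑ l ∈ Finset.Icc 3 (s - 1),
              (2 * (Real.pi : ℂ) * Complex.I) ^ l * (rho a l n σ : ℝ) / (Nat.factorial l)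
                * (α : ℝ) ^ l)
          + R α)) ∧
      ∀ α : ℝ, ‖R α‖ ≤ (2 * Real.pi) ^ s * rho a s n σ * |α| ^ s / (Nat.factorial s) :=
  phi_expansion_general a n σ hσ s hs
end

section
/- Assume condition (exp). Then δ_n > 0 for all sufficiently large n, and δ_n ≍ n^{−1/(r+1)}, i.e. there are constants C_1, C_2 > 0 and N such that C_1 n^{−1/(r+1)} ≤ δ_n ≤ C_2 n^{−1/(r+1)} for all n ≥ N. In particular δ_n → 0 and n·δ_n → ∞ as n → ∞. -/
open Finset Filter

/-- Condition (exp): `a_j ≍ j^{r-1} y^j`, i.e. there are constants `D₁, D₂ > 0` with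
`D₁ j^{r-1} y^j ≤ a_j ≤ D₂ j^{r-1} y^j` for all `j ≥ 1`. -/
def ExpansiveCond (a : ℕ → ℕ) (r y : ℝ) : Prop :=
  ∃ D₁ D₂ : ℝ, 0 < D₁ ∧ 0 < D₂ ∧ ∀ j : ℕ, 1 ≤ j →
    D₁ * (j : ℝ) ^ (r - 1) * y ^ j ≤ (a j : ℝ) ∧ (a j : ℝ) ≤ D₂ * (j : ℝ) ^ (r - 1) * y ^ j

/-!
Write `δ = σ - log y`, so that `y ^ j * exp (-(j * σ)) = exp (-(j * δ))`. Condition (exp) then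
bounds `M_n(σ)` below by a multiple of `∑_{j ≤ n} j ^ r e^{-jδ}` and, for `δ > 0`, above by a
multiple of `∑_{j ≤ n} (j ^ r + j ^ (r - 1) / δ) e^{-jδ}` (using `1 / (1 - e^{-x}) ≤ 1 + 1 / x`).
Splitting at `j = 1 / δ` shows `∑_j j ^ s e^{-jδ} = O(δ ^ (-(s + 1)))` for `s > -1`, so
`n = M_n(σ_n) ≤ C δ_n ^ (-(r + 1))`. Conversely, if `m ≤ n` and `m δ_n ≤ 1`, the first `m` terms
alone give `n ≥ c m ^ (r + 1)`: with `m = n` this forces `n δ_n > 1` for large `n`, and with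
`m = ⌊1 / δ_n⌋` it gives `δ_n ≥ c' n ^ (-1 / (r + 1))`.
-/

open Real Topology
open scoped Nat

lemma inv_one_sub_exp_neg_le {x : ℝ} (hx : 0 < x) : (1 - exp (-x))⁻¹ ≤ 1 + x⁻¹ := by
  have hex : 0 < exp x - 1 := by linarith [add_one_le_exp x]
  calc (1 - exp (-x))⁻¹ = 1 + (exp x - 1)⁻¹ := by
        rw [exp_neg]; field_simp; ring
    _ ≤ 1 + x⁻¹ := by gcongr; linarith [add_one_le_exp x]

lemma sum_Icc_exp_neg_mul_le {u : ℝ} (hu : 0 < u) (n : ℕ) :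
    ∑ j ∈ Icc 1 n, exp (-(j * u)) ≤ u⁻¹ := by
  have hq : exp (-u) < 1 := exp_lt_one_iff.mpr (by linarith)
  have hex : 0 < exp u - 1 := by linarith [add_one_le_exp u]
  calc ∑ j ∈ Icc 1 n, exp (-(j * u)) = ∑ j ∈ Ico 1 (n + 1), exp (-u) ^ j := by
        refine sum_congr rfl fun j _ => ?_
        rw [← exp_nat_mul]; ring_nf
    _ ≤ exp (-u) ^ 1 / (1 - exp (-u)) := geom_sum_Ico_le_of_lt_one (exp_nonneg _) hq
    _ = (exp u - 1)⁻¹ := by rw [pow_one, exp_neg]; field_simp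
    _ ≤ u⁻¹ := by gcongr; linarith [add_one_le_exp u]

lemma exists_rpow_le_mul_exp_half (s : ℝ) :
    ∃ K > 0, ∀ x : ℝ, 1 ≤ x → x ^ s ≤ K * exp (x / 2) := by
  set k := ⌈s⌉₊
  refine ⟨2 ^ k * k !, by positivity, fun x hx => ?_⟩
  calc x ^ s ≤ x ^ (k : ℝ) := rpow_le_rpow_of_exponent_le hx (Nat.le_ceil s)
    _ = 2 ^ k * k ! * ((x / 2) ^ k / k !) := by
        rw [rpow_natCast, div_pow]; field_simp
    _ ≤ 2 ^ k * k ! * exp (x / 2) := by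
        gcongr; exact pow_div_factorial_le_exp _ (by linarith) k

lemma neg_one_le_neg_inv_add_one {x : ℝ} (hx : 0 ≤ x) : -1 ≤ -(x + 1)⁻¹ := by
  rw [neg_le_neg_iff]; exact inv_le_one_of_one_le₀ (by linarith)

lemma rpow_add_one_mul_one_sub_inv {p x : ℝ} (hx : 0 ≤ x) :
    (x + 1) ^ p * (1 + -(x + 1)⁻¹) ^ p = x ^ p := by
  rw [← mul_rpow (by linarith) (by linarith [neg_one_le_neg_inv_add_one hx])]
  congr 1; field_simp; ring

lemma rpow_add_one_sub_rpow_le {p x : ℝ} (hp : 1 ≤ p) (hx : 0 ≤ x) :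
    (x + 1) ^ p - x ^ p ≤ p * (x + 1) ^ (p - 1) := by
  have hb := mul_le_mul_of_nonneg_left
    (one_add_mul_self_le_rpow_one_add (neg_one_le_neg_inv_add_one hx) hp)
    (rpow_nonneg (by linarith : 0 ≤ x + 1) p)
  rw [rpow_add_one_mul_one_sub_inv hx] at hb
  rw [rpow_sub_one (by linarith)]
  linear_combination hb

lemma le_rpow_add_one_sub_rpow {p x : ℝ} (hp₀ : 0 ≤ p) (hp₁ : p ≤ 1) (hx : 0 ≤ x) :
    p * (x + 1) ^ (p - 1) ≤ (x + 1) ^ p - x ^ p := by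
  have hb := mul_le_mul_of_nonneg_left
    (rpow_one_add_le_one_add_mul_self (neg_one_le_neg_inv_add_one hx) hp₀ hp₁)
    (rpow_nonneg (by linarith : 0 ≤ x + 1) p)
  rw [rpow_add_one_mul_one_sub_inv hx] at hb
  rw [rpow_sub_one (by linarith)]
  linear_combination hb

lemma div_le_sum_Icc_rpow {s : ℝ} (hs : 0 ≤ s) (m : ℕ) :
    (m : ℝ) ^ (s + 1) / (s + 1) ≤ ∑ j ∈ Icc 1 m, (j : ℝ) ^ s := by
  induction m with
  | zero => simp [zero_rpow (by linarith : s + 1 ≠ 0)]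
  | succ m ih =>
    rw [sum_Icc_succ_top (by omega), Nat.cast_succ]
    have := rpow_add_one_sub_rpow_le (by linarith : 1 ≤ s + 1) m.cast_nonneg
    rw [add_sub_cancel_right] at this
    rw [div_le_iff₀ (by linarith)] at *
    linarith

lemma sum_Icc_rpow_le_div {s : ℝ} (hs₀ : -1 < s) (hs₁ : s ≤ 0) (m : ℕ) :
    ∑ j ∈ Icc 1 m, (j : ℝ) ^ s ≤ (m : ℝ) ^ (s + 1) / (s + 1) := by
  induction m with
  | zero => simp [zero_rpow (by linarith : s + 1 ≠ 0)]
  | succ m ih =>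
    rw [sum_Icc_succ_top (by omega), Nat.cast_succ]
    have := le_rpow_add_one_sub_rpow (by linarith : 0 ≤ s + 1) (by linarith) m.cast_nonneg
    rw [add_sub_cancel_right] at this
    rw [le_div_iff₀ (by linarith)] at *
    linarith

lemma exists_sum_Icc_rpow_le {s : ℝ} (hs : -1 < s) :
    ∃ C > 0, ∀ m : ℕ, ∑ j ∈ Icc 1 m, (j : ℝ) ^ s ≤ C * (m : ℝ) ^ (s + 1) := by
  rcases le_total s 0 with hs₀ | hs₀
  · exact ⟨(s + 1)⁻¹, inv_pos.mpr (by linarith), fun m => by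
      rw [inv_mul_eq_div]; exact sum_Icc_rpow_le_div hs hs₀ m⟩
  · refine ⟨1, one_pos, fun m => ?_⟩
    calc ∑ j ∈ Icc 1 m, (j : ℝ) ^ s ≤ ∑ _j ∈ Icc 1 m, (m : ℝ) ^ s := by
          refine sum_le_sum fun j hj => ?_
          have := mem_Icc.mp hj
          exact rpow_le_rpow (by positivity) (by exact_mod_cast this.2) hs₀
      _ = 1 * (m : ℝ) ^ (s + 1) := by
          rw [sum_const, Nat.card_Icc, add_tsub_cancel_right, nsmul_eq_mul,
            rpow_add_one' m.cast_nonneg (by linarith)]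
          ring

noncomputable def powExpSum (s δ : ℝ) (n : ℕ) : ℝ :=
  ∑ j ∈ Icc 1 n, (j : ℝ) ^ s * exp (-(j * δ))

lemma rpow_mul_exp_neg_le {s K x δ : ℝ} (hK : ∀ x : ℝ, 1 ≤ x → x ^ s ≤ K * exp (x / 2))
    (hδ : 0 < δ) (hx : 1 ≤ x * δ) :
    x ^ s * exp (-(x * δ)) ≤ K * δ ^ (-s) * exp (-(x * (δ / 2))) := by
  have hx₀ : 0 < x := pos_of_mul_pos_left (by linarith) hδ.le
  calc x ^ s * exp (-(x * δ)) = δ ^ (-s) * ((x * δ) ^ s * exp (-(x * δ))) := by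
        rw [mul_rpow hx₀.le hδ.le, rpow_neg hδ.le]; field_simp
    _ ≤ δ ^ (-s) * (K * exp (x * δ / 2) * exp (-(x * δ))) := by gcongr; exact hK _ hx
    _ = K * δ ^ (-s) * exp (-(x * (δ / 2))) := by
        rw [mul_assoc K, ← exp_add]; ring_nf

lemma exists_powExpSum_le {s : ℝ} (hs : -1 < s) :
    ∃ C > 0, ∀ δ > 0, ∀ n, powExpSum s δ n ≤ C * δ ^ (-(s + 1)) := by
  obtain ⟨C₀, hC₀, hsum⟩ := exists_sum_Icc_rpow_le hs
  obtain ⟨K, hK, hKexp⟩ := exists_rpow_le_mul_exp_half s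
  refine ⟨C₀ + 2 * K, by positivity, fun δ hδ n => ?_⟩
  set m := ⌊δ⁻¹⌋₊
  have hj₀ : ∀ j ∈ Icc 1 n, (0 : ℝ) < j := fun j hj => by
    exact_mod_cast (mem_Icc.mp hj).1
  rw [powExpSum, ← sum_filter_add_sum_filter_not (Icc 1 n) (· ≤ m), add_mul]
  gcongr ?_ + ?_
  · calc ∑ j ∈ (Icc 1 n).filter (· ≤ m), (j : ℝ) ^ s * exp (-(j * δ))
        ≤ ∑ j ∈ (Icc 1 n).filter (· ≤ m), (j : ℝ) ^ s := by
          refine sum_le_sum fun j hj => mul_le_of_le_one_right (by positivity) ?_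
          exact exp_le_one_iff.mpr (by have := hj₀ j (mem_filter.mp hj).1; nlinarith)
      _ ≤ ∑ j ∈ Icc 1 m, (j : ℝ) ^ s := by
          refine sum_le_sum_of_subset_of_nonneg (fun j hj => ?_) fun j _ _ => by positivity
          simp only [mem_filter, mem_Icc] at hj ⊢
          omega
      _ ≤ C₀ * (m : ℝ) ^ (s + 1) := hsum m
      _ ≤ C₀ * δ ^ (-(s + 1)) := by
          rw [rpow_neg hδ.le, ← inv_rpow hδ.le]
          gcongr
          · linarith
          · exact Nat.floor_le (inv_nonneg.mpr hδ.le)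
  · calc ∑ j ∈ (Icc 1 n).filter (fun j => ¬ j ≤ m), (j : ℝ) ^ s * exp (-(j * δ))
        ≤ ∑ j ∈ (Icc 1 n).filter (fun j => ¬ j ≤ m), K * δ ^ (-s) * exp (-(j * (δ / 2))) := by
          refine sum_le_sum fun j hj => rpow_mul_exp_neg_le hKexp hδ ?_
          have := (Nat.floor_lt (by positivity)).mp (not_le.mp (mem_filter.mp hj).2)
          rw [inv_lt_iff_one_lt_mul₀ hδ] at this
          linarith [mul_comm (j : ℝ) δ]
      _ ≤ ∑ j ∈ Icc 1 n, K * δ ^ (-s) * exp (-(j * (δ / 2))) :=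
          sum_le_sum_of_subset_of_nonneg (filter_subset _ _) fun j _ _ => by positivity
      _ ≤ K * δ ^ (-s) * (δ / 2)⁻¹ := by
          rw [← mul_sum]; gcongr; exact sum_Icc_exp_neg_mul_le (by positivity) n
      _ = 2 * K * δ ^ (-(s + 1)) := by
          rw [neg_add, rpow_add hδ, rpow_neg_one]; ring

lemma le_powExpSum {r δ : ℝ} (hr : 0 ≤ r) {m n : ℕ} (hmn : m ≤ n) (hmδ : m * δ ≤ 1) :
    exp (-1) / (r + 1) * (m : ℝ) ^ (r + 1) ≤ powExpSum r δ n := by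
  have hjδ : ∀ j ∈ Icc 1 m, (j : ℝ) * δ ≤ 1 := fun j hj => by
    have hjm : (j : ℝ) ≤ m := by exact_mod_cast (mem_Icc.mp hj).2
    rcases le_total δ 0 with hδ | hδ
    · nlinarith [j.cast_nonneg (α := ℝ)]
    · nlinarith
  calc exp (-1) / (r + 1) * (m : ℝ) ^ (r + 1)
      = exp (-1) * ((m : ℝ) ^ (r + 1) / (r + 1)) := by ring
    _ ≤ exp (-1) * ∑ j ∈ Icc 1 m, (j : ℝ) ^ r := by gcongr; exact div_le_sum_Icc_rpow hr m
    _ = ∑ j ∈ Icc 1 m, (j : ℝ) ^ r * exp (-1) := by rw [mul_sum]; simp_rw [mul_comm]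
    _ ≤ ∑ j ∈ Icc 1 m, (j : ℝ) ^ r * exp (-(j * δ)) := by
        gcongr with j hj; linarith [hjδ j hj]
    _ ≤ powExpSum r δ n :=
        sum_le_sum_of_subset_of_nonneg (Icc_subset_Icc_right hmn) fun j _ _ => by positivity

lemma pow_mul_exp_neg_mul {y : ℝ} (hy : 0 < y) (j : ℕ) (σ : ℝ) :
    y ^ j * exp (-(j * σ)) = exp (-(j * (σ - log y))) := by
  rw [← exp_log hy, ← exp_nat_mul, ← exp_add, log_exp]; ring_nf

lemma rpow_eq_rpow_sub_one_mul {r x : ℝ} (hx : 0 < x) : x ^ r = x * x ^ (r - 1) := by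
  rw [rpow_sub_one hx.ne']; field_simp

section Mfun

variable {a : ℕ → ℕ} {r y : ℝ}

lemma mul_powExpSum_le_Mfun {D₁ σ : ℝ} (hy : 0 < y)
    (hlo : ∀ j : ℕ, 1 ≤ j → D₁ * (j : ℝ) ^ (r - 1) * y ^ j ≤ a j) (hσ : 0 < σ) (n : ℕ) :
    D₁ * powExpSum r (σ - log y) n ≤ Mfun a n σ := by
  rw [powExpSum, Mfun, mul_sum]
  refine sum_le_sum fun j hj => ?_
  have hj₁ := (mem_Icc.mp hj).1
  have hj₀ : (0 : ℝ) < j := by exact_mod_cast hj₁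
  have he : exp (-(j * σ)) < 1 := exp_lt_one_iff.mpr (by nlinarith)
  calc D₁ * ((j : ℝ) ^ r * exp (-(j * (σ - log y))))
      = j * (D₁ * (j : ℝ) ^ (r - 1) * y ^ j) * exp (-(j * σ)) := by
        rw [← pow_mul_exp_neg_mul hy, rpow_eq_rpow_sub_one_mul hj₀]; ring
    _ ≤ j * a j * exp (-(j * σ)) := by gcongr; exact hlo j hj₁
    _ ≤ j * a j * exp (-(j * σ)) / (1 - exp (-(j * σ))) :=
        le_div_self (by positivity) (by linarith) (by linarith [exp_nonneg (-(j * σ))])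

lemma Mfun_le_mul_powExpSum {D₂ σ : ℝ} (hy : 1 ≤ y)
    (hhi : ∀ j : ℕ, 1 ≤ j → (a j : ℝ) ≤ D₂ * (j : ℝ) ^ (r - 1) * y ^ j)
    (hδ : 0 < σ - log y) (n : ℕ) :
    Mfun a n σ ≤ D₂ * (powExpSum r (σ - log y) n
      + (σ - log y)⁻¹ * powExpSum (r - 1) (σ - log y) n) := by
  set δ := σ - log y
  have hδσ : δ ≤ σ := by linarith [log_nonneg hy]
  rw [powExpSum, powExpSum, mul_sum, ← sum_add_distrib, Mfun, mul_sum]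
  refine sum_le_sum fun j hj => ?_
  have hj₁ := (mem_Icc.mp hj).1
  have hj₀ : (0 : ℝ) < j := by exact_mod_cast hj₁
  have he : exp (-(j * σ)) < 1 := exp_lt_one_iff.mpr (by nlinarith)
  have hnum : j * a j * exp (-(j * σ)) ≤ D₂ * ((j : ℝ) ^ r * exp (-(j * δ))) := by
    calc j * a j * exp (-(j * σ)) ≤ j * (D₂ * (j : ℝ) ^ (r - 1) * y ^ j) * exp (-(j * σ)) := by
          gcongr; exact hhi j hj₁
      _ = D₂ * ((j : ℝ) ^ r * exp (-(j * δ))) := by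
          rw [← pow_mul_exp_neg_mul (by linarith), rpow_eq_rpow_sub_one_mul (r := r) hj₀]; ring
  have hinv : (1 - exp (-(j * σ)))⁻¹ ≤ 1 + (j * δ)⁻¹ :=
    (inv_one_sub_exp_neg_le (by nlinarith)).trans (by gcongr)
  calc j * a j * exp (-(j * σ)) / (1 - exp (-(j * σ)))
      ≤ D₂ * ((j : ℝ) ^ r * exp (-(j * δ))) * (1 + (j * δ)⁻¹) := by
        rw [div_eq_mul_inv]
        exact mul_le_mul hnum hinv (inv_nonneg.mpr (by linarith))
          ((by positivity : (0 : ℝ) ≤ _).trans hnum)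
    _ = D₂ * ((j : ℝ) ^ r * exp (-(j * δ)) + δ⁻¹ * ((j : ℝ) ^ (r - 1) * exp (-(j * δ)))) := by
        rw [rpow_eq_rpow_sub_one_mul hj₀]; field_simp

lemma exists_Mfun_le_rpow {D₂ : ℝ} (hr : 0 < r) (hy : 1 ≤ y) (hD₂ : 0 < D₂)
    (hhi : ∀ j : ℕ, 1 ≤ j → (a j : ℝ) ≤ D₂ * (j : ℝ) ^ (r - 1) * y ^ j) :
    ∃ C > 0, ∀ (n : ℕ) (σ : ℝ), 0 < σ - log y → Mfun a n σ ≤ C * (σ - log y) ^ (-(r + 1)) := by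
  obtain ⟨C, hC, hCsum⟩ := exists_powExpSum_le (s := r) (by linarith)
  obtain ⟨C', hC', hC'sum⟩ := exists_powExpSum_le (s := r - 1) (by linarith)
  refine ⟨D₂ * (C + C'), by positivity, fun n σ hδ => ?_⟩
  set δ := σ - log y
  calc Mfun a n σ ≤ D₂ * (powExpSum r δ n + δ⁻¹ * powExpSum (r - 1) δ n) :=
        Mfun_le_mul_powExpSum hy hhi hδ n
    _ ≤ D₂ * (C * δ ^ (-(r + 1)) + δ⁻¹ * (C' * δ ^ (-(r - 1 + 1)))) := by
        gcongr
        · exact hCsum δ hδ n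
        · exact hC'sum δ hδ n
    _ = D₂ * (C + C') * δ ^ (-(r + 1)) := by
        rw [sub_add_cancel, neg_add, rpow_add hδ, rpow_neg_one]; ring

end Mfun

lemma le_of_le_mul_rpow_neg {x n C p : ℝ} (hx : 0 < x) (hn : 0 < n)
    (hC : 0 ≤ C) (hp : 0 < p) (h : n ≤ C * x ^ (-p)) : x ≤ C ^ (1 / p) * n ^ (-(1 / p)) := by
  have hxp : x ^ p ≤ C / n := by
    rw [rpow_neg hx.le, ← div_eq_mul_inv, le_div_iff₀ (rpow_pos_of_pos hx p)] at h
    rw [le_div_iff₀ hn]; linarith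
  rw [← rpow_le_rpow_iff hx.le (by positivity) hp, mul_rpow (by positivity) (by positivity),
    ← rpow_mul hC, ← rpow_mul hn.le]
  simpa [hp.ne', rpow_neg_one, div_eq_mul_inv] using hxp

lemma mul_rpow_neg_le_of_forall_mul_le_one {x c p : ℝ} {n : ℕ} (hp : 0 < p) (hc : 0 < c)
    (hx : 0 < x) (hx₁ : x ≤ 1) (hnx : 1 ≤ n * x)
    (h : ∀ m : ℕ, m ≤ n → m * x ≤ 1 → c * (m : ℝ) ^ p ≤ n) :
    c ^ (1 / p) / 2 * (n : ℝ) ^ (-(1 / p)) ≤ x := by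
  set m := ⌊x⁻¹⌋₊
  have hm₁ : 1 ≤ m := Nat.le_floor (by rw [Nat.cast_one]; exact one_le_inv_iff₀.mpr ⟨hx, hx₁⟩)
  have hmx : (m : ℝ) ≤ x⁻¹ := Nat.floor_le (by positivity)
  have hmn : m ≤ n := Nat.floor_le_of_le (by rw [inv_le_iff_one_le_mul₀ hx]; linarith [mul_comm x n])
  have hn : (0 : ℝ) < n := by exact_mod_cast (hm₁.trans hmn)
  have hm : (m : ℝ) ≤ ((n : ℝ) / c) ^ (1 / p) := by
    rw [one_div, le_rpow_inv_iff_of_pos (by positivity) (by positivity) hp, le_div_iff₀ hc]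
    linarith [h m hmn ((le_div_iff₀ hx).mp (by rwa [one_div]))]
  have h2m : x⁻¹ ≤ 2 * m := by
    have := Nat.lt_floor_add_one x⁻¹
    have : (1 : ℝ) ≤ m := by exact_mod_cast hm₁
    linarith
  calc c ^ (1 / p) / 2 * (n : ℝ) ^ (-(1 / p)) = (2 * ((n : ℝ) / c) ^ (1 / p))⁻¹ := by
        rw [div_rpow hn.le hc.le, rpow_neg hn.le]; field_simp
    _ ≤ (2 * (m : ℝ))⁻¹ := by gcongr
    _ ≤ x := by rw [inv_le_comm₀ (by positivity) hx]; exact h2m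

section Asymptotics

variable {δ : ℕ → ℝ} {p c C : ℝ}

lemma eventually_one_lt_mul_of_forall_mul_le_one (hp : 1 < p) (hc : 0 < c)
    (hlow : ∀ n : ℕ, 1 ≤ n → ∀ m : ℕ, m ≤ n → m * δ n ≤ 1 → c * (m : ℝ) ^ p ≤ n) :
    ∀ᶠ n : ℕ in atTop, 1 < n * δ n := by
  have hgrow : Tendsto (fun n : ℕ => c * (n : ℝ) ^ (p - 1)) atTop atTop :=
    ((tendsto_rpow_atTop (by linarith)).comp tendsto_natCast_atTop_atTop).const_mul_atTop hc
  filter_upwards [hgrow.eventually_gt_atTop 1, eventually_ge_atTop 1] with n hn hn₁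
  by_contra! hle
  have hn₀ : (0 : ℝ) < n := by exact_mod_cast hn₁
  have := hlow n hn₁ n le_rfl hle
  rw [rpow_sub_one hn₀.ne', mul_div_assoc', lt_div_iff₀ hn₀, one_mul] at hn
  linarith

lemma asymptotics_of_bounds (hp : 1 < p) (hc : 0 < c) (hC : 0 < C)
    (hlow : ∀ n : ℕ, 1 ≤ n → ∀ m : ℕ, m ≤ n → m * δ n ≤ 1 → c * (m : ℝ) ^ p ≤ n)
    (hup : ∀ n : ℕ, 1 ≤ n → 0 < δ n → (n : ℝ) ≤ C * δ n ^ (-p)) :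
    (∃ N : ℕ, ∀ n ≥ N, 0 < δ n) ∧
    (∃ C₁ C₂ : ℝ, 0 < C₁ ∧ 0 < C₂ ∧ ∃ N : ℕ, ∀ n ≥ N,
      C₁ * (n : ℝ) ^ (-(1 / p)) ≤ δ n ∧ δ n ≤ C₂ * (n : ℝ) ^ (-(1 / p))) ∧
    Tendsto δ atTop (𝓝 0) ∧ Tendsto (fun n : ℕ => (n : ℝ) * δ n) atTop atTop := by
  have hp₀ : 0 < p := by linarith
  have hmul := eventually_one_lt_mul_of_forall_mul_le_one hp hc hlow
  have hpos : ∀ᶠ n : ℕ in atTop, 0 < δ n :=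
    hmul.mono fun n h => pos_of_mul_pos_right (by linarith) n.cast_nonneg
  have hupper : ∀ᶠ n : ℕ in atTop, δ n ≤ C ^ (1 / p) * (n : ℝ) ^ (-(1 / p)) := by
    filter_upwards [hpos, eventually_ge_atTop 1] with n hδ hn
    exact le_of_le_mul_rpow_neg hδ (by exact_mod_cast hn) hC.le hp₀
      (hup n hn hδ)
  have hlim : Tendsto δ atTop (𝓝 0) := by
    have : Tendsto (fun n : ℕ => C ^ (1 / p) * (n : ℝ) ^ (-(1 / p))) atTop (𝓝 0) := by
      simpa using ((tendsto_rpow_neg_atTop (by positivity)).comp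
        tendsto_natCast_atTop_atTop).const_mul (C ^ (1 / p))
    exact tendsto_of_tendsto_of_tendsto_of_le_of_le' tendsto_const_nhds this
      (hpos.mono fun _ h => h.le) hupper
  have hlower : ∀ᶠ n : ℕ in atTop, c ^ (1 / p) / 2 * (n : ℝ) ^ (-(1 / p)) ≤ δ n := by
    filter_upwards [hpos, hmul, hlim.eventually_le_const one_pos, eventually_ge_atTop 1]
      with n hδ hnδ hδ₁ hn
    exact mul_rpow_neg_le_of_forall_mul_le_one hp₀ hc hδ hδ₁ hnδ.le (hlow n hn)
  refine ⟨eventually_atTop.mp hpos, ⟨_, _, by positivity, by positivity,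
    eventually_atTop.mp (hlower.and hupper)⟩, hlim, ?_⟩
  have hgrow : Tendsto (fun n : ℕ => c ^ (1 / p) / 2 * (n : ℝ) ^ (1 - 1 / p)) atTop atTop :=
    ((tendsto_rpow_atTop (sub_pos.mpr ((div_lt_one hp₀).mpr hp))).comp
      tendsto_natCast_atTop_atTop).const_mul_atTop (by positivity)
  refine tendsto_atTop_mono' atTop ?_ hgrow
  filter_upwards [hlower, eventually_ge_atTop 1] with n h hn
  have hn₀ : (0 : ℝ) < n := by exact_mod_cast hn
  calc c ^ (1 / p) / 2 * (n : ℝ) ^ (1 - 1 / p)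
      = n * (c ^ (1 / p) / 2 * (n : ℝ) ^ (-(1 / p))) := by
        rw [sub_eq_add_neg, rpow_add hn₀, rpow_one]; ring
    _ ≤ n * δ n := by gcongr

end Asymptotics

/-- under condition (exp), `δ_n = σ_n - log y` is eventually positive,
`δ_n ≍ n^{-1/(r+1)}`, and in particular `δ_n → 0` and `n·δ_n → ∞`. -/
theorem delta_asymptotics (a : ℕ → ℕ) (r y : ℝ) (hr : 0 < r) (hy : 1 ≤ y)
    (hexp : ExpansiveCond a r y)
    (σ : ℕ → ℝ) (hσ : ∀ n : ℕ, 1 ≤ n → 0 < σ n ∧ Mfun a n (σ n) = n) :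
    (∃ N : ℕ, ∀ n ≥ N, 0 < σ n - Real.log y) ∧
    (∃ C₁ C₂ : ℝ, 0 < C₁ ∧ 0 < C₂ ∧ ∃ N : ℕ, ∀ n ≥ N,
      C₁ * (n : ℝ) ^ (-(1 / (r + 1))) ≤ σ n - Real.log y ∧
      σ n - Real.log y ≤ C₂ * (n : ℝ) ^ (-(1 / (r + 1)))) ∧
    Tendsto (fun n : ℕ => σ n - Real.log y) atTop (nhds 0) ∧
    Tendsto (fun n : ℕ => (n : ℝ) * (σ n - Real.log y)) atTop atTop := by
  obtain ⟨D₁, D₂, hD₁, hD₂, hbounds⟩ := hexp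
  obtain ⟨C, hC, hMC⟩ := exists_Mfun_le_rpow hr hy hD₂ fun j hj => (hbounds j hj).2
  refine asymptotics_of_bounds (δ := fun n => σ n - log y) (c := D₁ * (exp (-1) / (r + 1)))
    (by linarith) (by positivity) hC (fun n hn m hmn hmδ => ?_) (fun n hn hδ => ?_)
  · rw [← (hσ n hn).2, mul_assoc]
    exact (mul_le_mul_of_nonneg_left (le_powExpSum hr.le hmn hmδ) hD₁.le).trans
      (mul_powExpSum_le_Mfun (by linarith) (fun j hj => (hbounds j hj).1) (hσ n hn).1 n)
  · rw [← (hσ n hn).2]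
    exact hMC n (σ n) hδ
end

section
/- Assume condition (exp). Then there exists N > 0 such that for all n ≥ N: σ_{n+1} < σ_n (hence δ_{n+1} < δ_n), B_n² ≤ B_{n+1}², and ρ_l(n) ≤ ρ_l(n+1) for every integer l ≥ 3. -/
open Finset Filter

/-!
Every summand of `Mfun`, `B2` and `rho` is nonnegative and decreasing in `σ`, so once
`σ (n + 1) < σ n` the claims on `B2` and `rho` follow termwise. Since `Mfun a (n + 1)` is
decreasing and `Mfun a (n + 1) (σ n) = n + t`, where `t` is its summand `j = n + 1`, it suffices
that `t < 1`. By (exp), `t ≲ D₂ (n+1)^r e^{-(n+1) δ_n}`, so `(n + 1) δ_n` has to exceed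
`r log (n + 1)` by a large constant. If `μ δ_n ≤ 1`, the summands `j ≤ μ` of
`Mfun a n (σ n) = n` are `≳ j^r`, whence `n ≳ μ^(r+1)`; for `μ = n^s` with `1/(r+1) < s < 1`
this fails when `n` is large, so `δ_n > n^(-s)` and `(n + 1) δ_n > n^(1-s) ≫ log n`.
-/

open Real Set

lemma antitoneOn_mul_exp_div_one_sub_exp_pow {c j : ℝ} (hc : 0 ≤ c) (hj : 0 < j) (k : ℕ) :
    AntitoneOn (fun σ ↦ c * exp (-(j * σ)) / (1 - exp (-(j * σ))) ^ k) (Ioi 0) := by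
  intro s hs t _ hst
  have hs_lt : exp (-(j * s)) < 1 := exp_lt_one_iff.2 (by nlinarith [mem_Ioi.1 hs])
  have hts : exp (-(j * t)) ≤ exp (-(j * s)) := exp_le_exp.2 (by nlinarith)
  exact div_le_div₀ (by positivity) (by gcongr) (by simpa using pow_pos (sub_pos.2 hs_lt) k)
    (by gcongr)

lemma Mfun_antitoneOn (a : ℕ → ℕ) (n : ℕ) : AntitoneOn (Mfun a n) (Ioi 0) := by
  intro s hs t ht hst
  refine Finset.sum_le_sum fun j hj ↦ ?_
  have hj : (0 : ℝ) < j := by exact_mod_cast (Finset.mem_Icc.1 hj).1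
  simpa using antitoneOn_mul_exp_div_one_sub_exp_pow (c := j * a j) (by positivity) hj 1 hs ht hst

lemma sum_Icc_le_sum_Icc_succ_of_antitoneOn {f : ℕ → ℝ → ℝ} {n : ℕ} {s t : ℝ}
    (hf : ∀ j ∈ Finset.Icc 1 n, AntitoneOn (f j) (Ioi 0)) (hf₀ : 0 ≤ f (n + 1) t)
    (ht : 0 < t) (hts : t ≤ s) :
    ∑ j ∈ Finset.Icc 1 n, f j s ≤ ∑ j ∈ Finset.Icc 1 (n + 1), f j t := by
  rw [Finset.sum_Icc_succ_top (by omega)]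
  exact le_add_of_le_of_nonneg
    (Finset.sum_le_sum fun j hj ↦ hf j hj ht (ht.trans_le hts) hts) hf₀

lemma B2_le_B2_succ (a : ℕ → ℕ) (n : ℕ) {s t : ℝ} (ht : 0 < t) (hts : t ≤ s) :
    B2 a n s ≤ B2 a (n + 1) t :=
  sum_Icc_le_sum_Icc_succ_of_antitoneOn
    (fun j hj ↦ antitoneOn_mul_exp_div_one_sub_exp_pow (by positivity)
      (by exact_mod_cast (Finset.mem_Icc.1 hj).1) 2) (by positivity) ht hts

lemma summable_succ_pow_mul_exp (p : ℕ) {c : ℝ} (hc : 0 < c) :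
    Summable fun k : ℕ ↦ ((k : ℝ) + 1) ^ p * exp (-(c * ((k : ℝ) + 1))) := by
  have hq : ‖exp (-c)‖ < 1 := by
    rw [norm_of_nonneg (exp_pos _).le, exp_lt_one_iff]; linarith
  have hgeom := summable_pow_mul_geometric_of_norm_lt_one p hq
  refine ((summable_nat_add_iff 1).2 hgeom).congr fun k ↦ ?_
  rw [← exp_nat_mul, Nat.cast_add_one, mul_neg, mul_comm _ c]

lemma antitoneOn_mul_tsum_pow_mul_exp (p : ℕ) {c j : ℝ} (hc : 0 ≤ c) (hj : 0 < j) :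
    AntitoneOn (fun σ ↦ c * ∑' k : ℕ, ((k : ℝ) + 1) ^ p * exp (-(j * ((k : ℝ) + 1) * σ)))
      (Ioi 0) := by
  intro s hs t ht hst
  have hsum : ∀ σ ∈ Ioi (0 : ℝ),
      Summable fun k : ℕ ↦ ((k : ℝ) + 1) ^ p * exp (-(j * ((k : ℝ) + 1) * σ)) := fun σ hσ ↦ by
    simpa only [mul_right_comm j] using summable_succ_pow_mul_exp p (mul_pos hj hσ)
  refine mul_le_mul_of_nonneg_left (Summable.tsum_le_tsum (fun k ↦ ?_) (hsum t ht) (hsum s hs)) hc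
  gcongr

lemma rho_le_rho_succ (a : ℕ → ℕ) (l n : ℕ) {s t : ℝ} (ht : 0 < t) (hts : t ≤ s) :
    rho a l n s ≤ rho a l (n + 1) t :=
  sum_Icc_le_sum_Icc_succ_of_antitoneOn
    (fun j hj ↦ antitoneOn_mul_tsum_pow_mul_exp (l - 1) (by positivity)
      (by exact_mod_cast (Finset.mem_Icc.1 hj).1))
    (mul_nonneg (by positivity) (tsum_nonneg fun k ↦ by positivity)) ht hts

lemma rpow_add_one_div_le_sum_Icc_rpow {r : ℝ} (hr : 0 ≤ r) (m : ℕ) :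
    (m : ℝ) ^ (r + 1) / (r + 1) ≤ ∑ j ∈ Finset.Icc 1 m, (j : ℝ) ^ r := by
  have hint := MonotoneOn.integral_le_sum (x₀ := 0) (a := m) (f := fun x : ℝ ↦ x ^ r)
    fun x hx y _ hxy ↦ rpow_le_rpow hx.1 hxy hr
  rw [zero_add, integral_rpow (Or.inl (by linarith)), zero_rpow (by linarith), sub_zero] at hint
  refine hint.trans_eq ?_
  rw [Finset.range_eq_Ico, ← Finset.Ico_add_one_right_eq_Icc, ← Finset.sum_Ico_add' _ 0 m 1]
  simp

lemma mul_rpow_mul_pow_mul_exp {j : ℕ} (hj : 0 < j) {y : ℝ} (hy : 0 < y) (D r σ : ℝ) :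
    (j : ℝ) * (D * (j : ℝ) ^ (r - 1) * y ^ j) * exp (-(j * σ)) =
      D * (j : ℝ) ^ r * exp (-(j * (σ - log y))) := by
  have hj' : (j : ℝ) ≠ 0 := by positivity
  rw [rpow_sub_one hj', ← exp_log hy, ← exp_nat_mul, log_exp]
  field_simp
  rw [mul_assoc, ← exp_add]
  ring_nf

lemma rpow_le_of_Mfun_eq {a : ℕ → ℕ} {r y D₁ σ μ : ℝ} {n : ℕ} (hr : 0 ≤ r) (hy : 0 < y)
    (hD₁ : 0 ≤ D₁) (hlow : ∀ j : ℕ, 1 ≤ j → D₁ * (j : ℝ) ^ (r - 1) * y ^ j ≤ a j) (hσ : 0 < σ)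
    (hM : Mfun a n σ = n) (hμ : 1 ≤ μ) (hμn : μ ≤ n) (hμδ : μ * (σ - log y) ≤ 1) :
    D₁ * exp (-1) * (μ / 2) ^ (r + 1) / (r + 1) ≤ n := by
  set m := ⌊μ⌋₊
  have hm : 1 ≤ m := Nat.le_floor (by simpa using hμ)
  have hmn : m ≤ n := Nat.floor_le_of_le hμn
  have hμm : μ / 2 ≤ m := by
    have h₁ := Nat.lt_floor_add_one μ
    have h₂ : (1 : ℝ) ≤ m := by exact_mod_cast hm
    linarith
  have hterm : ∀ j ∈ Finset.Icc 1 m,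
      D₁ * exp (-1) * (j : ℝ) ^ r ≤ j * a j * exp (-(j * σ)) := fun j hj ↦ by
    obtain ⟨hj, hjm⟩ := Finset.mem_Icc.1 hj
    have hjμ : (j : ℝ) ≤ μ := (Nat.cast_le.2 hjm).trans (Nat.floor_le (by linarith))
    have hjδ : (j : ℝ) * (σ - log y) ≤ 1 := by
      rcases le_total 0 (σ - log y) with h | h <;> nlinarith
    calc D₁ * exp (-1) * (j : ℝ) ^ r ≤ D₁ * (j : ℝ) ^ r * exp (-(j * (σ - log y))) := by
          rw [mul_right_comm]; gcongr
      _ = j * (D₁ * (j : ℝ) ^ (r - 1) * y ^ j) * exp (-(j * σ)) :=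
          (mul_rpow_mul_pow_mul_exp hj hy D₁ r σ).symm
      _ ≤ j * a j * exp (-(j * σ)) := by gcongr; exact hlow j hj
  calc D₁ * exp (-1) * (μ / 2) ^ (r + 1) / (r + 1)
      ≤ D₁ * exp (-1) * ((m : ℝ) ^ (r + 1) / (r + 1)) := by
        rw [mul_div_assoc]; gcongr
    _ ≤ D₁ * exp (-1) * ∑ j ∈ Finset.Icc 1 m, (j : ℝ) ^ r := by
        gcongr; exact rpow_add_one_div_le_sum_Icc_rpow hr m
    _ ≤ ∑ j ∈ Finset.Icc 1 m, (j : ℝ) * a j * exp (-(j * σ)) := by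
        rw [Finset.mul_sum]; exact Finset.sum_le_sum hterm
    _ ≤ ∑ j ∈ Finset.Icc 1 n, (j : ℝ) * a j * exp (-(j * σ)) :=
        Finset.sum_le_sum_of_subset_of_nonneg (Finset.Icc_subset_Icc le_rfl hmn)
          fun j _ _ ↦ by positivity
    _ ≤ Mfun a n σ := Finset.sum_le_sum fun j hj ↦ by
        have hj : (0 : ℝ) < j := by exact_mod_cast (Finset.mem_Icc.1 hj).1
        have he : exp (-(j * σ)) < 1 := exp_lt_one_iff.2 (by nlinarith)
        exact le_div_self (by positivity) (by linarith) (by linarith [exp_pos (-(j * σ))])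
    _ = n := hM

lemma rpow_le_mul_sub_log_of_Mfun_eq {a : ℕ → ℕ} {r y D₁ σ s : ℝ} {n : ℕ} (hr : 0 ≤ r)
    (hy : 0 < y) (hD₁ : 0 ≤ D₁)
    (hlow : ∀ j : ℕ, 1 ≤ j → D₁ * (j : ℝ) ^ (r - 1) * y ^ j ≤ a j) (hσ : 0 < σ)
    (hM : Mfun a n σ = n) (hn : 1 ≤ (n : ℝ)) (hs₀ : 0 ≤ s) (hs₁ : s ≤ 1)
    (hbig : (n : ℝ) < D₁ * exp (-1) / 2 ^ (r + 1) / (r + 1) * (n : ℝ) ^ (s * (r + 1))) :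
    ((n : ℝ) + 1) ^ (1 - s) ≤ (n + 1) * (σ - log y) := by
  have hn₀ : (0 : ℝ) < n := by linarith
  have hμδ : 1 < (n : ℝ) ^ s * (σ - log y) := by
    by_contra! h
    have := rpow_le_of_Mfun_eq hr hy hD₁ hlow hσ hM (one_le_rpow hn hs₀)
      (rpow_le_self_of_one_le hn hs₁) h
    rw [div_rpow (by positivity) zero_le_two, ← rpow_mul hn₀.le] at this
    have : D₁ * exp (-1) / 2 ^ (r + 1) / (r + 1) * (n : ℝ) ^ (s * (r + 1)) ≤ n := by
      convert this using 1; ring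
    linarith
  have hδ : ((n : ℝ) ^ s)⁻¹ < σ - log y :=
    (inv_lt_iff_one_lt_mul₀' (rpow_pos_of_pos hn₀ s)).2 hμδ
  calc ((n : ℝ) + 1) ^ (1 - s) = (n + 1) * (((n : ℝ) + 1) ^ s)⁻¹ := by
        rw [rpow_sub (by linarith), rpow_one, div_eq_mul_inv]
    _ ≤ (n + 1) * ((n : ℝ) ^ s)⁻¹ := by gcongr; linarith
    _ ≤ (n + 1) * (σ - log y) := by gcongr

lemma Mfun_term_lt_one {a : ℕ → ℕ} {r y D₂ σ : ℝ} {N : ℕ} (hN : 1 ≤ N) (hr : 0 ≤ r)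
    (hy : 1 ≤ y) (hD₂ : 0 ≤ D₂) (hup : (a N : ℝ) ≤ D₂ * (N : ℝ) ^ (r - 1) * y ^ N)
    (hδ : (D₂ + 2) * (N : ℝ) ^ r < exp (N * (σ - log y))) :
    N * a N * exp (-(N * σ)) / (1 - exp (-(N * σ))) < 1 := by
  have hN₀ : (0 : ℝ) < N := by exact_mod_cast hN
  have hNr : 1 ≤ (N : ℝ) ^ r := one_le_rpow (by exact_mod_cast hN) hr
  have hsmall : exp (-(N * (σ - log y))) * ((D₂ + 2) * (N : ℝ) ^ r) < 1 := by
    rw [exp_neg, inv_mul_lt_one₀ (exp_pos _)]; exact hδ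
  have hx : exp (-(N * σ)) ≤ exp (-(N * (σ - log y))) :=
    exp_le_exp.2 (by nlinarith [log_nonneg hy])
  have hT : N * a N * exp (-(N * σ)) ≤ D₂ * (N : ℝ) ^ r * exp (-(N * (σ - log y))) := by
    rw [← mul_rpow_mul_pow_mul_exp hN (by linarith) D₂ r σ]; gcongr
  set Y := exp (-(N * (σ - log y)))
  have hY : 0 < Y * (N : ℝ) ^ r := by positivity
  have hX : exp (-(N * σ)) ≤ Y * (N : ℝ) ^ r :=
    hx.trans (le_mul_of_one_le_right (by positivity) hNr)
  rw [div_lt_one (by nlinarith)]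
  nlinarith

lemma eventually_mul_rpow_lt_exp_rpow (C r : ℝ) {t : ℝ} (ht : 0 < t) :
    ∀ᶠ x : ℝ in atTop, C * x ^ r < exp (x ^ t) := by
  have h := (tendsto_exp_mul_div_rpow_atTop (r / t) 1 one_pos).comp (tendsto_rpow_atTop ht)
  filter_upwards [h.eventually_gt_atTop C, eventually_gt_atTop 0] with x hx hx₀
  rw [Function.comp_apply, one_mul, ← rpow_mul hx₀.le, mul_div_cancel₀ _ ht.ne',
    lt_div_iff₀ (rpow_pos_of_pos hx₀ r)] at hx
  exact hx

lemma eventually_lt_mul_rpow {c p : ℝ} (hc : 0 < c) (hp : 1 < p) :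
    ∀ᶠ x : ℝ in atTop, x < c * x ^ p := by
  filter_upwards [(tendsto_rpow_atTop (sub_pos.2 hp)).eventually_gt_atTop c⁻¹,
    eventually_gt_atTop 0] with x hx hx₀
  rw [rpow_sub_one hx₀.ne', inv_lt_iff_one_lt_mul₀ hc, div_mul_eq_mul_div, one_lt_div hx₀,
    mul_comm] at hx
  exact hx

lemma eventually_sigma_succ_lt {a : ℕ → ℕ} {r y : ℝ} (hr : 0 < r) (hy : 1 ≤ y)
    (hexp : ExpansiveCond a r y) {σ : ℕ → ℝ}
    (hσ : ∀ n : ℕ, 1 ≤ n → 0 < σ n ∧ Mfun a n (σ n) = n) :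
    ∀ᶠ n : ℕ in atTop, σ (n + 1) < σ n := by
  obtain ⟨D₁, D₂, hD₁, hD₂, hbd⟩ := hexp
  obtain ⟨s, hs₁, hs₂⟩ := exists_between (inv_lt_one_of_one_lt₀ (by linarith : 1 < r + 1))
  have hs : 0 < s := (inv_pos.2 (by linarith)).trans hs₁
  have hp : 1 < s * (r + 1) := by rw [inv_lt_iff_one_lt_mul₀ (by linarith)] at hs₁; linarith
  set c := D₁ * exp (-1) / 2 ^ (r + 1) / (r + 1)
  have hc : 0 < c := by positivity
  have hreal : ∀ᶠ x : ℝ in atTop, 1 ≤ x ∧ x < c * x ^ (s * (r + 1)) ∧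
      (D₂ + 2) * (x + 1) ^ r < exp ((x + 1) ^ (1 - s)) := by
    filter_upwards [eventually_ge_atTop 1, eventually_lt_mul_rpow hc hp,
      (tendsto_atTop_add_const_right _ 1 tendsto_id).eventually
        (eventually_mul_rpow_lt_exp_rpow (D₂ + 2) r (sub_pos.2 hs₂))] with x h₁ h₂ h₃
    exact ⟨h₁, h₂, h₃⟩
  filter_upwards [tendsto_natCast_atTop_atTop.eventually hreal] with n ⟨hn, hnc, hnexp⟩
  obtain ⟨hσn, hMn⟩ := hσ n (by exact_mod_cast hn)
  obtain ⟨-, hMn'⟩ := hσ (n + 1) (by omega)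
  have htail : (D₂ + 2) * ((n + 1 : ℕ) : ℝ) ^ r < exp ((n + 1 : ℕ) * (σ n - log y)) := by
    rw [Nat.cast_add_one]
    exact hnexp.trans_le (exp_le_exp.2 (rpow_le_mul_sub_log_of_Mfun_eq hr.le (by linarith)
      hD₁.le (fun j hj ↦ (hbd j hj).1) hσn hMn hn hs.le hs₂.le hnc))
  have hlt : Mfun a (n + 1) (σ n) < n + 1 := by
    have := Mfun_term_lt_one (a := a) (by omega) hr.le hy hD₂.le (hbd (n + 1) (by omega)).2 htail
    rw [Mfun, Finset.sum_Icc_succ_top (by omega), ← Mfun, hMn]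
    linarith
  by_contra! hge
  have := Mfun_antitoneOn a (n + 1) hσn (hσn.trans_le hge) hge
  rw [hMn'] at this
  push_cast at this
  linarith

/-- under condition (exp), there is `N > 0` such that for all `n ≥ N`:
`σ_{n+1} < σ_n` (hence `δ_{n+1} < δ_n`), `B_n² ≤ B_{n+1}²`, and
`ρ_l(n) ≤ ρ_l(n+1)` for every integer `l ≥ 3`. -/
theorem eventual_monotonicity (a : ℕ → ℕ) (r y : ℝ) (hr : 0 < r) (hy : 1 ≤ y)
    (hexp : ExpansiveCond a r y)
    (σ : ℕ → ℝ) (hσ : ∀ n : ℕ, 1 ≤ n → 0 < σ n ∧ Mfun a n (σ n) = n) :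
    ∃ N : ℕ, 0 < N ∧ ∀ n ≥ N,
      σ (n + 1) < σ n ∧
      (σ (n + 1) - Real.log y < σ n - Real.log y) ∧
      B2 a n (σ n) ≤ B2 a (n + 1) (σ (n + 1)) ∧
      ∀ l : ℕ, 3 ≤ l → rho a l n (σ n) ≤ rho a l (n + 1) (σ (n + 1)) := by
  obtain ⟨N, hN⟩ := eventually_atTop.1 (eventually_sigma_succ_lt hr hy hexp hσ)
  refine ⟨N + 1, N.succ_pos, fun n hn ↦ ?_⟩
  have hlt := hN n (by omega)
  have hpos := (hσ (n + 1) (by omega)).1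
  exact ⟨hlt, sub_lt_sub_right hlt _, B2_le_B2_succ a n hpos hlt.le,
    fun l _ ↦ rho_le_rho_succ a l n hpos hlt.le⟩
end
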